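/- Let F be a complete geodesic metric space that is tree-graded with respect to a collection 𝒫 of pieces, and let g be an isometry of F permuting the pieces. If g fixes two distinct points x, y ∈ F (i.e. g(x) = x and g(y) = y), then g fixes pointwise the set Cutp{x,y}: g(p) = p for every p ∈ Cutp{x,y}. -/

import Mathlib

/-- A geodesic from `x` to `y`, parametrized by arc length on the interval `[0, dist x y]`. -/
def IsGeodesicFrom {X : Type*} [MetricSpace X] (γ : ℝ → X) (x y : X) : Prop :=
  γ 0 = x ∧ γ (dist x y) = y ∧
    ∀ s ∈ Set.Icc (0 : ℝ) (dist x y), ∀ t ∈ Set.Icc (0 : ℝ) (dist x y),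
      dist (γ s) (γ t) = |s - t|

/-- A metric space is geodesic if every two points are joined by a geodesic. -/
def IsGeodesicSpace (X : Type*) [MetricSpace X] : Prop :=
  ∀ x y : X, ∃ γ : ℝ → X, IsGeodesicFrom γ x y

/-- A subset is geodesic if every two of its points are joined by a geodesic contained in it. -/
def IsGeodesicSubset {X : Type*} [MetricSpace X] (A : Set X) : Prop :=
  ∀ x ∈ A, ∀ y ∈ A, ∃ γ : ℝ → X, IsGeodesicFrom γ x y ∧
    γ '' Set.Icc (0 : ℝ) (dist x y) ⊆ A

/-- A simple non-trivial geodesic triangle with pairwise distinct vertices `x, y, z` and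
sides `γ₁, γ₂, γ₃`, any two sides meeting exactly in their common vertex. -/
def IsSimpleGeodesicTriangle {X : Type*} [MetricSpace X]
    (γ₁ γ₂ γ₃ : ℝ → X) (x y z : X) : Prop :=
  x ≠ y ∧ y ≠ z ∧ z ≠ x ∧
  IsGeodesicFrom γ₁ x y ∧ IsGeodesicFrom γ₂ y z ∧ IsGeodesicFrom γ₃ z x ∧
  (γ₁ '' Set.Icc (0 : ℝ) (dist x y)) ∩ (γ₂ '' Set.Icc (0 : ℝ) (dist y z)) = {y} ∧
  (γ₂ '' Set.Icc (0 : ℝ) (dist y z)) ∩ (γ₃ '' Set.Icc (0 : ℝ) (dist z x)) = {z} ∧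
  (γ₃ '' Set.Icc (0 : ℝ) (dist z x)) ∩ (γ₁ '' Set.Icc (0 : ℝ) (dist x y)) = {x}

/-- `𝒞` is a tree-grading of the complete geodesic metric space `X`:
a collection of closed geodesic proper subsets (pieces) covering `X` such that
(T₁) two distinct pieces meet in at most one point, and
(T₂) every simple non-trivial geodesic triangle is contained in one piece. -/
structure IsTreeGraded (X : Type*) [MetricSpace X] (𝒞 : Set (Set X)) : Prop where
  closed : ∀ P ∈ 𝒞, IsClosed P
  geodesic : ∀ P ∈ 𝒞, IsGeodesicSubset P
  proper : ∀ P ∈ 𝒞, P ≠ Set.univ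
  covers : ⋃₀ 𝒞 = Set.univ
  t1 : ∀ P ∈ 𝒞, ∀ Q ∈ 𝒞, P ≠ Q → (P ∩ Q).Subsingleton
  t2 : ∀ (γ₁ γ₂ γ₃ : ℝ → X) (x y z : X), IsSimpleGeodesicTriangle γ₁ γ₂ γ₃ x y z →
    ∃ P ∈ 𝒞, (γ₁ '' Set.Icc (0 : ℝ) (dist x y)) ∪ (γ₂ '' Set.Icc (0 : ℝ) (dist y z)) ∪
      (γ₃ '' Set.Icc (0 : ℝ) (dist z x)) ⊆ P

/-- The set of cut-points of the arc `γ([0,d])`: the complement, in the arc, of the union of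
the interiors of all subarcs arising as intersections of the arc with a single piece. -/
def cutpSet {X : Type*} [MetricSpace X] (𝒞 : Set (Set X)) (γ : ℝ → X) (d : ℝ) : Set X :=
  {p | ∃ t ∈ Set.Icc (0 : ℝ) d, γ t = p ∧
    ¬ ∃ P ∈ 𝒞, ∃ s u : ℝ, 0 ≤ s ∧ s < t ∧ t < u ∧ u ≤ d ∧
      γ '' Set.Icc s u = (γ '' Set.Icc (0 : ℝ) d) ∩ P}

/-!
An isometry fixing `x` and `y` carries a geodesic `γ` from `x` to `y` to another geodesic
`g ∘ γ` from `x` to `y`, so it suffices that a cut point `γ t` lies on every geodesic `δ` from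
`x` to `y`, at the same parameter `t`. Otherwise `γ` and `δ` part on a maximal open interval
`(a, b) ∋ t`; there they form a bigon which, cut at a midpoint, is a simple geodesic triangle
and hence lies in one piece `Q` by (T₂). A geodesic meets each piece in a subarc (by the same
bigon argument together with (T₁)), so `γ` meets `Q` in a subarc with `t` in its interior, and
`γ t` is not a cut point.
-/

open Set

theorem IsClosed.exists_lt_lt_disjoint_Ioo {α : Type*} [ConditionallyCompleteLinearOrder α]
    [TopologicalSpace α] [OrderTopology α] {S : Set α} (hS : IsClosed S) {s r u : α}
    (hs : s ∈ S) (hu : u ∈ S) (hsr : s ≤ r) (hru : r ≤ u) (hr : r ∉ S) :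
    ∃ a ∈ S, ∃ b ∈ S, a < r ∧ r < b ∧ Disjoint (Ioo a b) S := by
  have hbelow : BddAbove (S ∩ Iic r) := ⟨r, fun _ h => h.2⟩
  have habove : BddBelow (S ∩ Ici r) := ⟨r, fun _ h => h.2⟩
  have ha := (hS.inter isClosed_Iic).csSup_mem ⟨s, hs, hsr⟩ hbelow
  have hb := (hS.inter isClosed_Ici).csInf_mem ⟨u, hu, hru⟩ habove
  refine ⟨_, ha.1, _, hb.1, ha.2.lt_of_ne fun h => hr (h ▸ ha.1),
    hb.2.lt_of_ne' fun h => hr (h ▸ hb.1), disjoint_left.2 fun w hw hwS => ?_⟩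
  rcases le_total w r with hwr | hrw
  · exact (le_csSup hbelow ⟨hwS, hwr⟩).not_gt hw.1
  · exact (csInf_le habove ⟨hwS, hrw⟩).not_gt hw.2

theorem Set.OrdConnected.eq_Icc_of_isClosed {α : Type*} [ConditionallyCompleteLinearOrder α]
    [TopologicalSpace α] [OrderTopology α] {S : Set α} (hS : S.OrdConnected)
    (hc : IsClosed S) (hne : S.Nonempty) (h₁ : BddBelow S) (h₂ : BddAbove S) :
    S = Icc (sInf S) (sSup S) :=
  (subset_Icc_csInf_csSup h₁ h₂).antisymm
    (hS.out (hc.csInf_mem hne h₁) (hc.csSup_mem hne h₂))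

theorem image_const_add_Icc_zero_sub {X : Type*} (γ : ℝ → X) (a b : ℝ) :
    (fun s => γ (a + s)) '' Icc 0 (b - a) = γ '' Icc a b := by
  rw [← image_image γ (a + ·), image_const_add_Icc, add_zero, add_sub_cancel]

namespace IsGeodesicFrom

variable {X : Type*} [MetricSpace X] {γ δ : ℝ → X} {x y z : X} {s t a b : ℝ}

theorem dist_eq (h : IsGeodesicFrom γ x y) (hs : s ∈ Icc 0 (dist x y))
    (ht : t ∈ Icc 0 (dist x y)) : dist (γ s) (γ t) = |s - t| :=
  h.2.2 s hs t ht

theorem dist_left (h : IsGeodesicFrom γ x y) (hs : s ∈ Icc 0 (dist x y)) :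
    dist x (γ s) = s := by
  rw [← h.1, h.dist_eq (left_mem_Icc.2 dist_nonneg) hs, zero_sub, abs_neg, abs_of_nonneg hs.1]

theorem dist_of_le (h : IsGeodesicFrom γ x y) (ha : 0 ≤ a) (hab : a ≤ b)
    (hb : b ≤ dist x y) :
    dist (γ a) (γ b) = b - a := by
  rw [h.dist_eq ⟨ha, hab.trans hb⟩ ⟨ha.trans hab, hb⟩, abs_sub_comm,
    abs_of_nonneg (sub_nonneg.2 hab)]

theorem eq_of_apply_eq (hγ : IsGeodesicFrom γ x y) (hδ : IsGeodesicFrom δ x z)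
    (hs : s ∈ Icc 0 (dist x y)) (ht : t ∈ Icc 0 (dist x z)) (h : γ s = δ t) : s = t := by
  rw [← hγ.dist_left hs, ← hδ.dist_left ht, h]

theorem injOn (h : IsGeodesicFrom γ x y) : InjOn γ (Icc 0 (dist x y)) :=
  fun _ hs _ ht => h.eq_of_apply_eq h hs ht

theorem continuousOn (h : IsGeodesicFrom γ x y) : ContinuousOn γ (Icc 0 (dist x y)) :=
  (LipschitzOnWith.of_dist_le_mul (K := 1) fun s hs t ht => by
    simp [h.dist_eq hs ht, Real.dist_eq]).continuousOn

theorem restrict (h : IsGeodesicFrom γ x y) (ha : 0 ≤ a) (hab : a ≤ b) (hb : b ≤ dist x y) :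
    IsGeodesicFrom (fun s => γ (a + s)) (γ a) (γ b) := by
  have hd := h.dist_of_le ha hab hb
  refine ⟨by simp, by simp [hd], fun s hs t ht => ?_⟩
  rw [hd] at hs ht
  rw [h.dist_eq ⟨by linarith [hs.1], by linarith [hs.2]⟩
      ⟨by linarith [ht.1], by linarith [ht.2]⟩,
    add_sub_add_left_eq_sub]

theorem symm (h : IsGeodesicFrom γ x y) : IsGeodesicFrom (fun s => γ (dist x y - s)) y x := by
  refine ⟨by simpa using h.2.1, by simpa [dist_comm] using h.1, fun s hs t ht => ?_⟩
  rw [dist_comm] at hs ht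
  rw [h.dist_eq ⟨by linarith [hs.2], by linarith [hs.1]⟩
      ⟨by linarith [ht.2], by linarith [ht.1]⟩,
    abs_sub_comm, sub_sub_sub_cancel_left]

theorem image_symm (γ : ℝ → X) (x y : X) :
    (fun s => γ (dist x y - s)) '' Icc 0 (dist y x) = γ '' Icc 0 (dist x y) := by
  rw [dist_comm y x, ← image_image γ (dist x y - ·), image_const_sub_Icc, sub_zero, sub_self]

theorem isClosed_preimage (h : IsGeodesicFrom γ x y) {F : Set X} (hF : IsClosed F) :
    IsClosed (Icc 0 (dist x y) ∩ γ ⁻¹' F) :=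
  h.continuousOn.preimage_isClosed_of_isClosed isClosed_Icc hF

end IsGeodesicFrom

theorem Isometry.isGeodesicFrom {X Y : Type*} [MetricSpace X] [MetricSpace Y] {f : X → Y}
    (hf : Isometry f) {γ : ℝ → X} {x y : X} (h : IsGeodesicFrom γ x y) :
    IsGeodesicFrom (f ∘ γ) (f x) (f y) := by
  refine ⟨congrArg f h.1, by simpa [hf.dist_eq] using congrArg f h.2.1, fun s hs t ht => ?_⟩
  rw [hf.dist_eq] at hs ht
  simp [hf.dist_eq, h.dist_eq hs ht]

namespace IsTreeGraded

variable {X : Type*} [MetricSpace X] {𝒞 : Set (Set X)} {γ δ : ℝ → X} {x y : X}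

theorem exists_piece_of_bigon (htg : IsTreeGraded X 𝒞) {p q : X} (hpq : p ≠ q)
    (hγ : IsGeodesicFrom γ p q) (hδ : IsGeodesicFrom δ p q)
    (hint : γ '' Icc 0 (dist p q) ∩ δ '' Icc 0 (dist p q) ⊆ {p, q}) :
    ∃ P ∈ 𝒞, γ '' Icc 0 (dist p q) ∪ δ '' Icc 0 (dist p q) ⊆ P := by
  set D := dist p q
  have hD : 0 < D := dist_pos.2 hpq
  set m := D / 2
  have hm : 0 < m := half_pos hD
  have hmD : m < D := half_lt_self hD
  have hpm : dist p (γ m) = m := hγ.dist_left ⟨hm.le, hmD.le⟩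
  have hγ₁ := hγ.restrict le_rfl hm.le hmD.le
  have hγ₂ := hγ.restrict hm.le hmD.le le_rfl
  rw [hγ.1] at hγ₁
  rw [hγ.2.1] at hγ₂
  have e₁ : (fun s => γ (0 + s)) '' Icc 0 (dist p (γ m)) = γ '' Icc 0 m := by
    rw [hpm, ← image_const_add_Icc_zero_sub γ 0 m, sub_zero]
  have e₂ : (fun s => γ (m + s)) '' Icc 0 (dist (γ m) q) = γ '' Icc m D := by
    rw [← hγ.2.1, hγ.dist_of_le hm.le hmD.le le_rfl, image_const_add_Icc_zero_sub]
  have e₃ := IsGeodesicFrom.image_symm δ p q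
  have hp_param : ∀ r ∈ Icc 0 D, γ r = p → r = 0 := fun r hr h => by
    simpa [h] using (hγ.dist_left hr).symm
  have hq_param : ∀ r ∈ Icc 0 D, γ r = q → r = D := fun r hr h => by
    simpa [h] using (hγ.dist_left hr).symm
  have htri : IsSimpleGeodesicTriangle (fun s => γ (0 + s)) (fun s => γ (m + s))
      (fun s => δ (dist p q - s)) p (γ m) q := by
    refine ⟨fun h => ?_, fun h => ?_, hpq.symm, hγ₁, hγ₂, hδ.symm, ?_, ?_, ?_⟩
    · exact hm.ne (hp_param m ⟨hm.le, hmD.le⟩ h.symm).symm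
    · exact hmD.ne (hq_param m ⟨hm.le, hmD.le⟩ h)
    · rw [e₁, e₂, ← hγ.injOn.image_inter (Icc_subset_Icc le_rfl hmD.le)
        (Icc_subset_Icc hm.le le_rfl), Icc_inter_Icc_eq_singleton hm.le hmD.le, image_singleton]
    · rw [e₂, e₃]
      refine subset_antisymm ?_ (singleton_subset_iff.2
        ⟨⟨D, ⟨hmD.le, le_rfl⟩, hγ.2.1⟩, ⟨D, ⟨hD.le, le_rfl⟩, hδ.2.1⟩⟩)
      rintro _ ⟨⟨r, hr, rfl⟩, hrδ⟩
      have hr' : r ∈ Icc 0 D := ⟨hm.le.trans hr.1, hr.2⟩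
      rcases hint ⟨mem_image_of_mem γ hr', hrδ⟩ with h | h
      · exact absurd (hp_param r hr' h) (hm.trans_le hr.1).ne'
      · exact h
    · rw [e₃, e₁]
      refine subset_antisymm ?_ (singleton_subset_iff.2
        ⟨⟨0, ⟨le_rfl, hD.le⟩, hδ.1⟩, ⟨0, ⟨le_rfl, hm.le⟩, hγ.1⟩⟩)
      rintro _ ⟨hrδ, ⟨r, hr, rfl⟩⟩
      have hr' : r ∈ Icc 0 D := ⟨hr.1, hr.2.trans hmD.le⟩
      rcases hint ⟨mem_image_of_mem γ hr', hrδ⟩ with h | h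
      · exact h
      · exact absurd (hq_param r hr' h) (hr.2.trans_lt hmD).ne
  obtain ⟨P, hP, hsub⟩ := htg.t2 _ _ _ p (γ m) q htri
  rw [e₁, e₂, e₃, ← image_union, Icc_union_Icc_eq_Icc hm.le hmD.le] at hsub
  exact ⟨P, hP, hsub⟩

theorem exists_piece_of_subarc (htg : IsTreeGraded X 𝒞) (hγ : IsGeodesicFrom γ x y) {a b : ℝ}
    (ha : 0 ≤ a) (hab : a < b) (hb : b ≤ dist x y) (hδ : IsGeodesicFrom δ (γ a) (γ b))
    (hmiss : ∀ v ∈ Ioo a b, γ v ∉ δ '' Icc 0 (dist (γ a) (γ b))) :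
    ∃ P ∈ 𝒞, γ '' Icc a b ⊆ P := by
  have hne : γ a ≠ γ b :=
    hγ.injOn.ne ⟨ha, hab.le.trans hb⟩ ⟨ha.trans hab.le, hb⟩ hab.ne
  have himg : (fun s => γ (a + s)) '' Icc 0 (dist (γ a) (γ b)) = γ '' Icc a b := by
    rw [hγ.dist_of_le ha hab.le hb, image_const_add_Icc_zero_sub]
  obtain ⟨P, hP, hsub⟩ := htg.exists_piece_of_bigon hne (hγ.restrict ha hab.le hb) hδ (by
    rw [himg]
    rintro _ ⟨⟨v, hv, rfl⟩, hvδ⟩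
    rcases hv.1.eq_or_lt with rfl | hav
    · exact .inl rfl
    rcases hv.2.eq_or_lt with rfl | hvb
    · exact .inr rfl
    exact absurd hvδ (hmiss v ⟨hav, hvb⟩))
  exact ⟨P, hP, himg ▸ subset_union_left.trans hsub⟩

theorem ordConnected_preimage (htg : IsTreeGraded X 𝒞) (hγ : IsGeodesicFrom γ x y)
    {P : Set X} (hP : P ∈ 𝒞) : (Icc 0 (dist x y) ∩ γ ⁻¹' P).OrdConnected := by
  refine ⟨fun s hs u hu r hr => by_contra fun hrS => ?_⟩
  obtain ⟨a, haS, b, hbS, har, hrb, hgap⟩ :=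
    (hγ.isClosed_preimage (htg.closed P hP)).exists_lt_lt_disjoint_Ioo hs hu hr.1 hr.2 hrS
  obtain ⟨δ, hδ, hδP⟩ := htg.geodesic P hP _ haS.2 _ hbS.2
  obtain ⟨Q, hQ, hQsub⟩ := htg.exists_piece_of_subarc hγ haS.1.1 (har.trans hrb) hbS.1.2 hδ
    fun v hv hvδ => disjoint_left.1 hgap hv
      ⟨⟨haS.1.1.trans hv.1.le, hv.2.le.trans hbS.1.2⟩, hδP hvδ⟩
  have hr' : r ∈ Icc 0 (dist x y) := ⟨haS.1.1.trans har.le, hrb.le.trans hbS.1.2⟩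
  obtain rfl | hPQ := eq_or_ne P Q
  · exact hrS ⟨hr', hQsub ⟨r, ⟨har.le, hrb.le⟩, rfl⟩⟩
  · exact (hγ.injOn.ne haS.1 hbS.1 (har.trans hrb).ne) (htg.t1 P hP Q hQ hPQ
      ⟨haS.2, hQsub ⟨a, left_mem_Icc.2 (har.trans hrb).le, rfl⟩⟩
      ⟨hbS.2, hQsub ⟨b, right_mem_Icc.2 (har.trans hrb).le, rfl⟩⟩)

end IsTreeGraded

theorem IsTreeGraded.apply_eq_of_mem_cutpSet {X : Type*} [MetricSpace X] {𝒞 : Set (Set X)}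
    (htg : IsTreeGraded X 𝒞) {γ δ : ℝ → X} {x y p : X} (hγ : IsGeodesicFrom γ x y)
    (hδ : IsGeodesicFrom δ x y) (hp : p ∈ cutpSet 𝒞 γ (dist x y)) :
    ∃ t, γ t = p ∧ δ t = p := by
  obtain ⟨t, ht, rfl, hcut⟩ := hp
  refine ⟨t, rfl, by_contra fun hne => hcut ?_⟩
  set d := dist x y
  set E := Icc 0 d ∩ (fun w => (γ w, δ w)) ⁻¹' diagonal X
  have hE : IsClosed E := (hγ.continuousOn.prodMk hδ.continuousOn).preimage_isClosed_of_isClosed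
    isClosed_Icc isClosed_diagonal
  have h0 : (0 : ℝ) ∈ E := ⟨left_mem_Icc.2 dist_nonneg, hγ.1.trans hδ.1.symm⟩
  have hd : d ∈ E := ⟨right_mem_Icc.2 dist_nonneg, hγ.2.1.trans hδ.2.1.symm⟩
  obtain ⟨a, haE, b, hbE, hat, htb, hgap⟩ :=
    hE.exists_lt_lt_disjoint_Ioo h0 hd ht.1 ht.2 fun h => hne h.2.symm
  have hab := hat.trans htb
  have hδab := hδ.restrict haE.1.1 hab.le hbE.1.2
  rw [← show γ a = δ a from haE.2, ← show γ b = δ b from hbE.2] at hδab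
  obtain ⟨Q, hQ, hQsub⟩ := htg.exists_piece_of_subarc hγ haE.1.1 hab hbE.1.2 hδab <| by
    rintro v hv ⟨s, hs, hδs : δ (a + s) = γ v⟩
    rw [hγ.dist_of_le haE.1.1 hab.le hbE.1.2] at hs
    have hv' : v ∈ Icc 0 d := ⟨haE.1.1.trans hv.1.le, hv.2.le.trans hbE.1.2⟩
    have hs' : a + s ∈ Icc 0 d := ⟨by linarith [haE.1.1, hs.1], by linarith [hbE.1.2, hs.2]⟩
    have hsv : a + s = v := hδ.eq_of_apply_eq hγ hs' hv' hδs
    exact disjoint_left.1 hgap hv ⟨hv', show γ v = δ v by rw [← hδs, hsv]⟩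
  set S := Icc 0 d ∩ γ ⁻¹' Q
  have haS : a ∈ S := ⟨haE.1, hQsub ⟨a, left_mem_Icc.2 hab.le, rfl⟩⟩
  have hbS : b ∈ S := ⟨hbE.1, hQsub ⟨b, right_mem_Icc.2 hab.le, rfl⟩⟩
  have hSbdd : BddBelow S ∧ BddAbove S := ⟨bddBelow_Icc.mono inter_subset_left,
    bddAbove_Icc.mono inter_subset_left⟩
  have hSeq := (htg.ordConnected_preimage hγ hQ).eq_Icc_of_isClosed
    (hγ.isClosed_preimage (htg.closed Q hQ)) ⟨a, haS⟩ hSbdd.1 hSbdd.2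
  have hS : Icc (sInf S) (sSup S) ⊆ Icc 0 d := hSeq ▸ inter_subset_left
  have hsu : sInf S ≤ sSup S := (csInf_le hSbdd.1 haS).trans (le_csSup hSbdd.2 haS)
  refine ⟨Q, hQ, sInf S, sSup S, (hS (left_mem_Icc.2 hsu)).1,
    (csInf_le hSbdd.1 haS).trans_lt hat, htb.trans_le (le_csSup hSbdd.2 hbS),
    (hS (right_mem_Icc.2 hsu)).2, ?_⟩
  rw [← hSeq, image_inter_preimage]

theorem statement9_general {X : Type*} [MetricSpace X]
    (𝒞 : Set (Set X)) (htg : IsTreeGraded X 𝒞)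
    (g : X ≃ᵢ X)
    (x y : X) (hgx : g x = x) (hgy : g y = y) :
    ∀ γ : ℝ → X, IsGeodesicFrom γ x y →
      ∀ p ∈ cutpSet 𝒞 γ (dist x y), g p = p := by
  intro γ hγ p hp
  have hgγ := g.isometry.isGeodesicFrom hγ
  rw [hgx, hgy] at hgγ
  obtain ⟨t, rfl, hgt⟩ := htg.apply_eq_of_mem_cutpSet hγ hgγ hp
  exact hgt

/-- Let `X` be a complete geodesic metric space tree-graded with respect to
`𝒞`, and let `g` be an isometry of `X` permuting the pieces. If `g` fixes two distinct points
`x` and `y`, then `g` fixes pointwise the set `Cutp{x,y}` (computed along any geodesic from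
`x` to `y`). -/
theorem statement9 {X : Type*} [MetricSpace X] [CompleteSpace X]
    (hgeo : IsGeodesicSpace X) (𝒞 : Set (Set X)) (htg : IsTreeGraded X 𝒞)
    (g : X ≃ᵢ X) (hperm : ∀ P ∈ 𝒞, g '' P ∈ 𝒞)
    (x y : X) (hxy : x ≠ y) (hgx : g x = x) (hgy : g y = y) :
    ∀ γ : ℝ → X, IsGeodesicFrom γ x y →
      ∀ p ∈ cutpSet 𝒞 γ (dist x y), g p = p :=
  statement9_general 𝒞 htg g x y hgx hgy
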